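/- arXiv:2403.04941 — 4 statements merged into one kernel-verified Lean document; each statement's English description precedes it below -/
import Mathlib

section
/- Fix n ≥ 1. Every group homomorphism χ : H_n → ℝ from the Houghton group H_n to the additive group of real numbers is a linear combination of the translation amounts: there exist real numbers a₁,…,a_n such that χ(σ) = a₁·m₁(σ) + ⋯ + a_n·m_n(σ) for every σ ∈ H_n. In particular, every group homomorphism H_n → ℝ vanishes on all finitely supported elements of H_n. -/
/-- A permutation `σ` of `Fin n × ℕ` is an *eventual translation* if there are integers
`m₁, …, m_n` and a finite set `F ⊆ Fin n × ℕ` such that `σ (i, k) = (i, k + mᵢ)` for all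
`(i, k) ∉ F`. -/
def IsEventualTranslation {n : ℕ} (σ : Equiv.Perm (Fin n × ℕ)) : Prop :=
  ∃ (m : Fin n → ℤ) (F : Finset (Fin n × ℕ)),
    ∀ p : Fin n × ℕ, p ∉ F →
      (σ p).1 = p.1 ∧ ((σ p).2 : ℤ) = (p.2 : ℤ) + m p.1

/-- The Houghton group `H_n`: the subgroup of `Equiv.Perm (Fin n × ℕ)` consisting of the
eventual translations. -/
def HoughtonGroup (n : ℕ) : Subgroup (Equiv.Perm (Fin n × ℕ)) where
  carrier := {σ | IsEventualTranslation σ}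
  one_mem' := ⟨0, ∅, fun p _ => by simp⟩
  mul_mem' := by
    rintro a b ⟨m, F, hF⟩ ⟨m', F', hF'⟩
    refine ⟨m + m', F' ∪ F.preimage b b.injective.injOn, fun p hp => ?_⟩
    simp only [Finset.mem_union, Finset.mem_preimage, not_or] at hp
    obtain ⟨hp1, hp2⟩ := hp
    obtain ⟨hb1, hb2⟩ := hF' p hp1
    obtain ⟨ha1, ha2⟩ := hF (b p) hp2
    refine ⟨by simp [Equiv.Perm.mul_apply, ha1, hb1], ?_⟩
    simp only [Equiv.Perm.mul_apply, Pi.add_apply]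
    rw [ha2, hb2, hb1]
    ring
  inv_mem' := by
    rintro a ⟨m, F, hF⟩
    refine ⟨-m, F.image a, fun p hp => ?_⟩
    have hmem : a⁻¹ p ∉ F := by
      intro h
      exact hp (Finset.mem_image.mpr ⟨a⁻¹ p, h, a.apply_symm_apply p⟩)
    obtain ⟨h1, h2⟩ := hF (a⁻¹ p) hmem
    rw [show a (a⁻¹ p) = p from a.apply_symm_apply p] at h1 h2
    refine ⟨h1.symm, ?_⟩
    rw [← h1] at h2
    simp only [Pi.neg_apply]
    omega

/-- The (uniquely determined) vector of eventual translation amounts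
`(m₁(σ), …, m_n(σ))` of an element `σ` of the Houghton group. -/
noncomputable def translationVector {n : ℕ} (σ : HoughtonGroup n) : Fin n → ℤ :=
  Classical.choose (show IsEventualTranslation (σ : Equiv.Perm (Fin n × ℕ)) from σ.2)

/-! The translation vector is a homomorphism `H_n → ℤⁿ` whose kernel consists of the finitary
permutations; the key point is that an element translating no ray outwards translates no ray at
all, by counting points in a large box. Finitary permutations are products of transpositions,
which every real character kills because they are involutions. Together with the shifts
`shift i₀ j`, of translation vector `e_j - e_{i₀}`, they generate `H_n`; so a character is
determined by its values `a_j` on the shifts, and `σ ↦ ∑ a_j m_j(σ)` is a character taking those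
values. -/

open Equiv

theorem Equiv.Perm.map_eq_one_of_finite_support {α G : Type*} [DecidableEq α] [Group G]
    {H : Subgroup (Perm α)} (hH : ∀ τ : Perm α, τ.IsSwap → τ ∈ H) (f : H →* G)
    (hf : ∀ τ : H, (τ : Perm α).IsSwap → f τ = 1) {σ : H}
    (hσ : {x | (σ : Perm α) x ≠ x}.Finite) : f σ = 1 := by
  have hle : Subgroup.closure {τ : Perm α | τ.IsSwap} ≤ f.ker.map H.subtype :=
    (Subgroup.closure_le _).2 fun τ hτ => ⟨⟨τ, hH τ hτ⟩, hf _ hτ, rfl⟩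
  obtain ⟨τ, hτ, hτσ⟩ := hle (mem_closure_isSwap'.2 hσ)
  rwa [Subtype.val_injective hτσ] at hτ

namespace HoughtonGroup

variable {n : ℕ}

theorem exists_translationVector_spec (σ : HoughtonGroup n) :
    ∃ F : Finset (Fin n × ℕ), ∀ p ∉ F, (σ.1 p).1 = p.1 ∧
      ((σ.1 p).2 : ℤ) = p.2 + translationVector σ p.1 :=
  Classical.choose_spec
    (show IsEventualTranslation (σ : Equiv.Perm (Fin n × ℕ)) from σ.2)

theorem translationVector_eq {σ : HoughtonGroup n} {m : Fin n → ℤ} {F : Finset (Fin n × ℕ)}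
    (h : ∀ p ∉ F, (σ.1 p).1 = p.1 ∧ ((σ.1 p).2 : ℤ) = p.2 + m p.1) :
    translationVector σ = m := by
  obtain ⟨F', hF'⟩ := exists_translationVector_spec σ
  funext i
  obtain ⟨N, hN⟩ := ((F ∪ F').image Prod.snd).exists_nat_subset_range
  have hout : (i, N) ∉ F ∪ F' := fun hmem =>
    Finset.notMem_range_self (hN (Finset.mem_image_of_mem Prod.snd hmem))
  rw [Finset.mem_union, not_or] at hout
  linarith [(h _ hout.1).2, (hF' _ hout.2).2]

theorem translationVector_mul (σ τ : HoughtonGroup n) :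
    translationVector (σ * τ) = translationVector σ + translationVector τ := by
  obtain ⟨F, hF⟩ := exists_translationVector_spec σ
  obtain ⟨G, hG⟩ := exists_translationVector_spec τ
  refine translationVector_eq (F := G ∪ F.preimage τ.1 τ.1.injective.injOn) fun p hp => ?_
  simp only [Finset.mem_union, Finset.mem_preimage, not_or] at hp
  obtain ⟨hτ₁, hτ₂⟩ := hG p hp.1
  obtain ⟨hσ₁, hσ₂⟩ := hF _ hp.2
  refine ⟨hσ₁.trans hτ₁, ?_⟩
  change ((σ.1 (τ.1 p)).2 : ℤ) = _
  rw [hσ₂, hτ₂, hτ₁, Pi.add_apply]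
  ring

noncomputable def translationHom : HoughtonGroup n →* Multiplicative (Fin n → ℤ) :=
  MonoidHom.mk' (fun σ => .ofAdd (translationVector σ)) fun σ τ =>
    congrArg Multiplicative.ofAdd (translationVector_mul σ τ)

theorem translationHom_apply (σ : HoughtonGroup n) :
    translationHom σ = .ofAdd (translationVector σ) := rfl

theorem translationVector_one : translationVector (1 : HoughtonGroup n) = 0 :=
  congrArg Multiplicative.toAdd (map_one translationHom)

theorem translationVector_inv (σ : HoughtonGroup n) :
    translationVector σ⁻¹ = -translationVector σ :=
  congrArg Multiplicative.toAdd (map_inv translationHom σ)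

theorem mem_of_finite_support {σ : Perm (Fin n × ℕ)} (hσ : {x | σ x ≠ x}.Finite) :
    σ ∈ HoughtonGroup n :=
  ⟨0, hσ.toFinset, fun p hp => by simp_all⟩

theorem translationVector_eq_zero_iff (σ : HoughtonGroup n) :
    translationVector σ = 0 ↔ {x | σ.1 x ≠ x}.Finite := by
  constructor
  · intro h
    obtain ⟨F, hF⟩ := exists_translationVector_spec σ
    refine F.finite_toSet.subset fun p hp => ?_
    by_contra hpF
    obtain ⟨h₁, h₂⟩ := hF p hpF
    rw [h, Pi.zero_apply, add_zero, Nat.cast_inj] at h₂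
    exact hp (Prod.ext h₁ h₂)
  · intro h
    exact translationVector_eq (F := h.toFinset) fun p hp => by simp_all

/-- For `N` large the box of points of height `≤ N` is mapped into itself, hence onto itself, and
the preimage of `(i, N)` shows that ray `i` is not translated inwards. -/
theorem translationVector_eq_zero_of_nonpos (σ : HoughtonGroup n)
    (hm : ∀ i, translationVector σ i ≤ 0) : translationVector σ = 0 := by
  obtain ⟨F, hF⟩ := exists_translationVector_spec σ
  obtain ⟨N, hN⟩ := (F.image Prod.snd ∪ F.image fun p => (σ.1 p).2).exists_nat_subset_range
  have hF_low : ∀ p ∈ F, (σ.1 p).2 < N := fun p hp =>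
    Finset.mem_range.1 (hN (Finset.mem_union_right _ (Finset.mem_image_of_mem _ hp)))
  set B : Finset (Fin n × ℕ) := Finset.univ ×ˢ Finset.range (N + 1)
  have hB : ∀ p, p ∈ B ↔ p.2 ≤ N := by simp [B]
  have hmaps : Set.MapsTo σ.1 B B := fun p hp => by
    rw [Finset.mem_coe, hB] at hp ⊢
    by_cases hpF : p ∈ F
    · exact (hF_low p hpF).le
    · have := (hF p hpF).2
      have := hm p.1
      omega
  funext i
  obtain ⟨p, hpB, hp⟩ := Finset.surjOn_of_injOn_of_card_le σ.1 hmaps σ.1.injective.injOn le_rfl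
    (show (i, N) ∈ (B : Set _) from (hB _).2 le_rfl)
  have hpF : p ∉ F := fun hpF => by simpa [hp] using hF_low p hpF
  obtain ⟨h₁, h₂⟩ := hF p hpF
  rw [hp] at h₁ h₂
  have := (hB p).1 hpB
  have := hm i
  simp only at h₁ h₂
  subst h₁
  rw [Pi.zero_apply]
  omega

theorem translationVector_eq_zero_of_forall_ne (σ : HoughtonGroup n) (i₀ : Fin n)
    (h : ∀ j ≠ i₀, translationVector σ j = 0) : translationVector σ = 0 := by
  have hle : ∀ τ : HoughtonGroup n, (∀ j ≠ i₀, translationVector τ j = 0) →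
      translationVector τ i₀ ≤ 0 → translationVector τ = 0 := fun τ hτ hτ₀ =>
    translationVector_eq_zero_of_nonpos τ fun j => by
      rcases eq_or_ne j i₀ with rfl | hj
      exacts [hτ₀, (hτ j hj).le]
  rcases le_total (translationVector σ i₀) 0 with hσ | hσ
  · exact hle σ h hσ
  · have := hle σ⁻¹ (fun j hj => by simp [translationVector_inv, h j hj])
      (by simpa [translationVector_inv] using hσ)
    rwa [translationVector_inv, neg_eq_zero] at this

/-- On the rays `i` and `j` glued at their origins into a copy of `ℤ`, with ray `i` as the
negative half, this is translation by `1`. -/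
def shiftFun (i j : Fin n) (p : Fin n × ℕ) : Fin n × ℕ :=
  if p.1 = j then (j, p.2 + 1)
  else if p.1 = i then (if p.2 = 0 then (j, 0) else (i, p.2 - 1))
  else p

theorem shiftFun_shiftFun {i j : Fin n} (h : i ≠ j) (p : Fin n × ℕ) :
    shiftFun j i (shiftFun i j p) = p := by
  obtain ⟨k, m⟩ := p
  unfold shiftFun
  split_ifs <;> simp_all; omega

def shiftPerm {i j : Fin n} (h : i ≠ j) : Perm (Fin n × ℕ) where
  toFun := shiftFun i j
  invFun := shiftFun j i
  left_inv := shiftFun_shiftFun h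
  right_inv := shiftFun_shiftFun h.symm

theorem shiftPerm_spec {i j : Fin n} (h : i ≠ j) :
    ∀ p ∉ ({(i, 0)} : Finset (Fin n × ℕ)), (shiftPerm h p).1 = p.1 ∧
      ((shiftPerm h p).2 : ℤ) = p.2 + (Pi.single j 1 - Pi.single i 1 : Fin n → ℤ) p.1 := by
  rintro ⟨k, m⟩ hp
  simp only [Finset.mem_singleton, Prod.mk.injEq, not_and] at hp
  simp only [shiftPerm, coe_fn_mk, shiftFun, Pi.sub_apply, Pi.single_apply]
  split_ifs <;> simp_all; omega

noncomputable def shift (i j : Fin n) : HoughtonGroup n :=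
  if h : i = j then 1 else ⟨shiftPerm h, _, _, shiftPerm_spec h⟩

theorem shift_self (i : Fin n) : shift i i = 1 := dif_pos rfl

theorem translationVector_shift (i j : Fin n) :
    translationVector (shift i j) = Pi.single j 1 - Pi.single i 1 := by
  by_cases h : i = j
  · rw [h, shift_self, sub_self, translationVector_one]
  · rw [shift, dif_neg h]
    exact translationVector_eq (shiftPerm_spec h)

theorem closure_finite_support_union_range_shift (i₀ : Fin n) :
    Subgroup.closure ({σ : HoughtonGroup n | {x | σ.1 x ≠ x}.Finite} ∪ Set.range (shift i₀)) =
      ⊤ := by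
  set K := Subgroup.closure
    ({σ : HoughtonGroup n | {x | σ.1 x ≠ x}.Finite} ∪ Set.range (shift i₀))
  have hfin : ∀ σ : HoughtonGroup n, {x | σ.1 x ≠ x}.Finite → σ ∈ K := fun σ hσ =>
    Subgroup.subset_closure (Or.inl hσ)
  have hshift : ∀ j, shift i₀ j ∈ K := fun j =>
    Subgroup.subset_closure (Set.mem_union_right _ (Set.mem_range_self j))
  refine eq_top_iff.2 fun σ _ => ?_
  obtain ⟨k, hk, hkσ⟩ : ∏ j, translationHom (shift i₀ j) ^ translationVector σ j ∈
      K.map translationHom :=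
    Subgroup.prod_mem _ fun j _ => Subgroup.zpow_mem _
      (Subgroup.mem_map_of_mem _ (hshift j)) _
  have hagree : ∀ j ≠ i₀, translationVector k j = translationVector σ j := fun j hj => by
    have := congrArg (fun v : Multiplicative (Fin n → ℤ) => v.toAdd j) hkσ
    simpa [translationHom_apply, toAdd_prod, translationVector_shift, Pi.single_apply, hj,
      mul_sub, Finset.sum_sub_distrib] using this
  have hrest : k⁻¹ * σ ∈ K := hfin _ <| (translationVector_eq_zero_iff _).1 <|
    translationVector_eq_zero_of_forall_ne _ i₀ fun j hj => by
      simp [translationVector_mul, translationVector_inv, hagree j hj]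
  simpa using K.mul_mem hk hrest

theorem toAdd_eq_zero_of_finite_support (f : HoughtonGroup n →* Multiplicative ℝ)
    {σ : HoughtonGroup n} (hσ : {x | σ.1 x ≠ x}.Finite) : (f σ).toAdd = 0 := by
  refine congrArg Multiplicative.toAdd (Perm.map_eq_one_of_finite_support
    (fun τ hτ => mem_of_finite_support hτ.finite_compl_fixedBy) f (fun τ hτ => ?_) hσ)
  obtain ⟨x, y, -, hτ⟩ := hτ
  have hτ2 : τ * τ = 1 := Subtype.ext (by simp [hτ])
  have : (f τ).toAdd + (f τ).toAdd = 0 := by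
    rw [← toAdd_mul, ← map_mul, hτ2, map_one, toAdd_one]
  exact congrArg Multiplicative.ofAdd (by linarith : (f τ).toAdd = 0)

theorem toAdd_eq_sum_translationVector (f : HoughtonGroup n →* Multiplicative ℝ) (i₀ : Fin n)
    (σ : HoughtonGroup n) :
    (f σ).toAdd = ∑ i, (f (shift i₀ i)).toAdd * translationVector σ i := by
  set a : Fin n → ℝ := fun i => (f (shift i₀ i)).toAdd
  let g : HoughtonGroup n →* Multiplicative ℝ :=
    MonoidHom.mk' (fun σ => .ofAdd (∑ i, a i * translationVector σ i)) fun σ τ =>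
      congrArg Multiplicative.ofAdd <| by
        simp [translationVector_mul, mul_add, Finset.sum_add_distrib]
  have hg : ∀ σ, (g σ).toAdd = ∑ i, a i * translationVector σ i := fun _ => rfl
  have hfg : f = g := by
    refine MonoidHom.eq_of_eqOn_dense (closure_finite_support_union_range_shift i₀) ?_
    rintro σ (hσ | ⟨j, rfl⟩) <;> refine Multiplicative.toAdd.injective ?_ <;> rw [hg]
    · simp [(translationVector_eq_zero_iff σ).2 hσ, toAdd_eq_zero_of_finite_support f hσ]
    · have ha₀ : a i₀ = 0 := by simp [a, shift_self]
      simp [translationVector_shift, Pi.single_apply, mul_sub, ha₀, a]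
  exact (congrArg Multiplicative.toAdd (DFunLike.congr_fun hfg σ)).trans (hg σ)

end HoughtonGroup

/-- Every group homomorphism `χ : H_n → ℝ` (`ℝ` additive) is a linear combination
`χ(σ) = a₁ m₁(σ) + ⋯ + a_n m_n(σ)` of the translation amounts; in particular `χ` vanishes
on every finitely supported element of `H_n`. -/
theorem houghton_characters (n : ℕ) (hn : 1 ≤ n) (χ : HoughtonGroup n → ℝ)
    (hχ : ∀ σ τ : HoughtonGroup n, χ (σ * τ) = χ σ + χ τ) :
    (∃ a : Fin n → ℝ,
      ∀ σ : HoughtonGroup n, χ σ = ∑ i, a i * (translationVector σ i : ℝ)) ∧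
    (∀ σ : HoughtonGroup n,
      {x : Fin n × ℕ | (σ : Equiv.Perm (Fin n × ℕ)) x ≠ x}.Finite → χ σ = 0) := by
  let f : HoughtonGroup n →* Multiplicative ℝ :=
    MonoidHom.mk' (fun σ => .ofAdd (χ σ)) fun σ τ => congrArg Multiplicative.ofAdd (hχ σ τ)
  exact ⟨⟨_, HoughtonGroup.toAdd_eq_sum_translationVector f ⟨0, hn⟩⟩,
    fun σ => HoughtonGroup.toAdd_eq_zero_of_finite_support f⟩
end

section
/- Fix n ≥ 1 and let G be a subgroup of the Houghton group H_n that contains every finitely supported element of H_n. If for every nonzero group homomorphism χ : H_n → ℝ there exists g ∈ G with χ(g) ≠ 0 (i.e. G is not contained in the kernel of any nonzero real character of H_n), then G has finite index in H_n. -/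
theorem AddCommGroup.exists_addMonoidHom_int_ne_zero (Q : Type*) [AddCommGroup Q] [AddGroup.FG Q]
    [Infinite Q] : ∃ ψ : Q →+ ℤ, ψ ≠ 0 := by
  classical
  obtain ⟨m, ι, _, p, hp, e, ⟨eqv⟩⟩ := AddCommGroup.equiv_free_prod_directSum_zmod Q
  rcases m.eq_zero_or_pos with rfl | hm
  · have : ∀ i, NeZero (p i ^ e i) := fun i => ⟨pow_ne_zero _ (hp i).ne_zero⟩
    have : Fintype (DirectSum ι fun i => ZMod (p i ^ e i)) := DFinsupp.fintype
    have : Finite Q := Finite.of_equiv _ eqv.symm.toEquiv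
    exact (not_finite Q).elim
  · let i₀ : Fin m := ⟨0, hm⟩
    refine ⟨((Finsupp.applyAddHom i₀).comp (AddMonoidHom.fst _ _)).comp eqv.toAddMonoidHom,
      fun h => ?_⟩
    have := DFunLike.congr_fun h (eqv.symm (Finsupp.single i₀ 1, 0))
    simp at this

theorem AddCommGroup.fg_addSubgroup {A : Type*} [AddCommGroup A] [AddGroup.FG A]
    (T : AddSubgroup A) : AddGroup.FG T := by
  have : Module.Finite ℤ A := Module.Finite.iff_addGroup_fg.mpr ‹_›
  exact Module.Finite.iff_addGroup_fg.mp
    (Module.Finite.iff_fg.mpr (IsNoetherian.noetherian (AddSubgroup.toIntSubmodule T)))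

theorem AddSubgroup.exists_addMonoidHom_real_ne_zero_of_index_eq_zero {A : Type*}
    [AddCommGroup A] [AddGroup.FG A] {B : AddSubgroup A} (hB : B.index = 0) :
    ∃ φ : A →+ ℝ, φ ≠ 0 ∧ B ≤ φ.ker := by
  have : Infinite (A ⧸ B) := AddSubgroup.index_eq_zero_iff_infinite.mp hB
  obtain ⟨ψ, hψ⟩ := AddCommGroup.exists_addMonoidHom_int_ne_zero (A ⧸ B)
  refine ⟨(Int.castAddHom ℝ).comp (ψ.comp (QuotientAddGroup.mk' B)), fun h => hψ ?_, ?_⟩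
  · ext a
    simpa using DFunLike.congr_fun h a
  · intro b hb
    simp [(QuotientAddGroup.eq_zero_iff b).mpr hb]

theorem AddSubgroup.exists_addMonoidHom_real_ne_zero_of_ker_le {H A : Type*} [AddGroup H]
    [AddCommGroup A] [AddGroup.FG A] (f : H →+ A) {G : AddSubgroup H} (hker : f.ker ≤ G)
    (hG : G.index = 0) : ∃ χ : H →+ ℝ, χ ≠ 0 ∧ G ≤ χ.ker := by
  have : AddGroup.FG f.range := AddCommGroup.fg_addSubgroup f.range
  -- `G` is the preimage of its image, so its index is the index of `f G` in `f H`.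
  have hrel : ((G.map f).addSubgroupOf f.range).index = 0 := by
    rwa [← AddSubgroup.relIndex, ← AddSubgroup.index_comap, AddSubgroup.comap_map_eq_self hker]
  obtain ⟨φ, hφ, hφB⟩ := exists_addMonoidHom_real_ne_zero_of_index_eq_zero hrel
  refine ⟨φ.comp f.rangeRestrict, fun h => hφ ?_, fun g hg => ?_⟩
  · ext ⟨_, x, rfl⟩
    exact DFunLike.congr_fun h x
  · exact hφB (AddSubgroup.mem_addSubgroupOf.mpr (AddSubgroup.mem_map_of_mem f hg))

namespace HoughtonGroup

open Equiv

variable {n : ℕ}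

def EventuallyTranslatesBy (σ : Perm (Fin n × ℕ)) (m : Fin n → ℤ) : Prop :=
  ∃ F : Finset (Fin n × ℕ), ∀ p ∉ F, (σ p).1 = p.1 ∧ ((σ p).2 : ℤ) = p.2 + m p.1

theorem EventuallyTranslatesBy.mul {σ τ : Perm (Fin n × ℕ)} {m m' : Fin n → ℤ}
    (hσ : EventuallyTranslatesBy σ m) (hτ : EventuallyTranslatesBy τ m') :
    EventuallyTranslatesBy (σ * τ) (m + m') := by
  obtain ⟨F, hF⟩ := hσ
  obtain ⟨F', hF'⟩ := hτ
  refine ⟨F' ∪ F.preimage τ τ.injective.injOn, fun p hp => ?_⟩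
  simp only [Finset.mem_union, Finset.mem_preimage, not_or] at hp
  obtain ⟨hτ₁, hτ₂⟩ := hF' p hp.1
  obtain ⟨hσ₁, hσ₂⟩ := hF (τ p) hp.2
  refine ⟨by rw [Perm.mul_apply, hσ₁, hτ₁], ?_⟩
  rw [Perm.mul_apply, hσ₂, hτ₂, hτ₁, Pi.add_apply]
  ring

theorem EventuallyTranslatesBy.unique {σ : Perm (Fin n × ℕ)} {m m' : Fin n → ℤ}
    (h : EventuallyTranslatesBy σ m) (h' : EventuallyTranslatesBy σ m') : m = m' := by
  obtain ⟨F, hF⟩ := h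
  obtain ⟨F', hF'⟩ := h'
  funext i
  obtain ⟨k, hk⟩ := Infinite.exists_notMem_finset ((F ∪ F').image Prod.snd)
  have hik : (i, k) ∉ F ∪ F' := fun hmem => hk (Finset.mem_image_of_mem Prod.snd hmem)
  rw [Finset.mem_union, not_or] at hik
  simpa using (hF _ hik.1).2.symm.trans (hF' _ hik.2).2

theorem EventuallyTranslatesBy.finite_support {σ : Perm (Fin n × ℕ)}
    (h : EventuallyTranslatesBy σ 0) : {p | σ p ≠ p}.Finite := by
  obtain ⟨F, hF⟩ := h
  refine F.finite_toSet.subset fun p hp => ?_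
  by_contra hpF
  obtain ⟨h₁, h₂⟩ := hF p hpF
  exact hp (Prod.ext h₁ (by simpa using h₂))

theorem exists_eventuallyTranslatesBy (σ : HoughtonGroup n) :
    ∃ m, EventuallyTranslatesBy (σ : Perm (Fin n × ℕ)) m :=
  σ.2

noncomputable def translation : Additive (HoughtonGroup n) →+ (Fin n → ℤ) :=
  AddMonoidHom.mk' (fun σ => (exists_eventuallyTranslatesBy σ.toMul).choose) fun σ τ =>
    (((exists_eventuallyTranslatesBy σ.toMul).choose_spec.mul
      (exists_eventuallyTranslatesBy τ.toMul).choose_spec).unique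
        (exists_eventuallyTranslatesBy (σ.toMul * τ.toMul)).choose_spec).symm

theorem eventuallyTranslatesBy_translation (σ : HoughtonGroup n) :
    EventuallyTranslatesBy (σ : Perm (Fin n × ℕ)) (translation (Additive.ofMul σ)) :=
  (exists_eventuallyTranslatesBy σ).choose_spec

end HoughtonGroup

open HoughtonGroup in
theorem houghton_subgroup_finite_index_general (n : ℕ)
    (G : Subgroup (HoughtonGroup n))
    (hfin : ∀ σ : HoughtonGroup n,
      {x : Fin n × ℕ | (σ : Equiv.Perm (Fin n × ℕ)) x ≠ x}.Finite → σ ∈ G)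
    (hchar : ∀ χ : HoughtonGroup n → ℝ,
      (∀ σ τ : HoughtonGroup n, χ (σ * τ) = χ σ + χ τ) →
      (∃ σ : HoughtonGroup n, χ σ ≠ 0) →
      ∃ g ∈ G, χ g ≠ 0) :
    G.index ≠ 0 := by
  intro hG
  have hker : translation.ker ≤ G.toAddSubgroup := fun σ hσ => by
    have h := eventuallyTranslatesBy_translation σ.toMul
    rw [ofMul_toMul, AddMonoidHom.mem_ker.mp hσ] at h
    exact hfin _ h.finite_support
  obtain ⟨χ, hχ, hχG⟩ :=
    AddSubgroup.exists_addMonoidHom_real_ne_zero_of_ker_le translation hker hG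
  obtain ⟨σ, hσ⟩ := DFunLike.ne_iff.mp hχ
  obtain ⟨g, hg, hχg⟩ :=
    hchar (fun σ => χ (Additive.ofMul σ)) (fun σ τ => map_add χ _ _) ⟨σ.toMul, hσ⟩
  exact hχg (hχG hg)

/-- If a subgroup `G` of the Houghton group `H_n` (`n ≥ 1`) contains every finitely
supported element and is not contained in the kernel of any nonzero real character of
`H_n`, then `G` has finite index in `H_n`. -/
theorem houghton_subgroup_finite_index (n : ℕ) (hn : 1 ≤ n)
    (G : Subgroup (HoughtonGroup n))
    (hfin : ∀ σ : HoughtonGroup n,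
      {x : Fin n × ℕ | (σ : Equiv.Perm (Fin n × ℕ)) x ≠ x}.Finite → σ ∈ G)
    (hchar : ∀ χ : HoughtonGroup n → ℝ,
      (∀ σ τ : HoughtonGroup n, χ (σ * τ) = χ σ + χ τ) →
      (∃ σ : HoughtonGroup n, χ σ ≠ 0) →
      ∃ g ∈ G, χ g ≠ 0) :
    G.index ≠ 0 :=
  houghton_subgroup_finite_index_general n G hfin hchar
end

section
/- Fix n ≥ 1 and let p be any point of Fin n × ℕ. The stabilizer of p in the Houghton group H_n, namely the subgroup {σ ∈ H_n : σ(p) = p}, is isomorphic as a group to H_n itself, and it has infinite index in H_n. In particular, H_n contains an infinite-index subgroup isomorphic to H_n. -/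
/-- The stabilizer of a point `p` in the Houghton group: the subgroup of elements of `H_n`
fixing `p`. -/
def houghtonStabilizer (n : ℕ) (p : Fin n × ℕ) : Subgroup (HoughtonGroup n) where
  carrier := {σ | (σ : Equiv.Perm (Fin n × ℕ)) p = p}
  one_mem' := rfl
  mul_mem' := by
    intro a b ha hb
    simp only [Set.mem_setOf_eq] at *
    simp [Equiv.Perm.mul_apply, ha, hb]
  inv_mem' := by
    intro a ha
    simp only [Set.mem_setOf_eq] at *
    simp only [Subgroup.coe_inv]
    exact (Equiv.symm_apply_eq _).mpr ha.symm

/-!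
Pushing the ray through `p` one step outwards, `(p.1, k) ↦ (p.1, k + 1)` for `k ≥ p.2`, is a
bijection `shift p` of `Fin n × ℕ` onto the complement of `p`, and it is itself an eventual
translation. Conjugating by it identifies the permutations fixing `p` with all permutations of
`Fin n × ℕ`; since eventual translations are finite-to-one, they are closed under composition,
so this identification carries the stabilizer of `p` in `H_n` onto `H_n`. The index is infinite
because transpositions move `p` to every point of its ray.
-/
namespace Function

def IsEventualTranslation {ι : Type*} (f : ι × ℕ → ι × ℕ) : Prop :=
  ∃ m : ι → ℤ, ∀ᶠ x in Filter.cofinite, (f x).1 = x.1 ∧ ((f x).2 : ℤ) = x.2 + m x.1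

namespace IsEventualTranslation

variable {ι : Type*} {f g : ι × ℕ → ι × ℕ}

theorem tendsto_cofinite (hf : IsEventualTranslation f) :
    Filter.Tendsto f Filter.cofinite Filter.cofinite := by
  obtain ⟨m, hm⟩ := hf
  -- After casting to `ι × ℤ`, `f` agrees off a finite set with an injective translation.
  let cast : ι × ℕ → ι × ℤ := Prod.map id (↑)
  have htranslate : Injective fun x : ι × ℕ => (x.1, (x.2 : ℤ) + m x.1) := by
    rintro ⟨i, k⟩ ⟨j, l⟩ h
    simp only [Prod.mk.injEq] at h
    obtain ⟨rfl, h⟩ := h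
    simpa using h
  have hcast_f : Filter.Tendsto (cast ∘ f) Filter.cofinite Filter.cofinite := by
    refine htranslate.tendsto_cofinite.congr' ?_
    filter_upwards [hm] with x hx
    exact Prod.ext hx.1.symm hx.2.symm
  exact (Filter.tendsto_comap_iff.2 hcast_f).mono_right (Filter.comap_cofinite_le cast)

theorem comp (hf : IsEventualTranslation f) (hg : IsEventualTranslation g) :
    IsEventualTranslation (f ∘ g) := by
  obtain ⟨m, hm⟩ := hf
  have hg_cofinite := hg.tendsto_cofinite
  obtain ⟨m', hm'⟩ := hg
  refine ⟨m + m', ?_⟩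
  filter_upwards [hm', hg_cofinite.eventually hm] with x hgx hfgx
  simp only [comp_apply, Pi.add_apply]
  rw [hfgx.1, hgx.1, hfgx.2, hgx.2, hgx.1]
  exact ⟨rfl, by ring⟩

theorem congr (hf : IsEventualTranslation f) (hfg : f =ᶠ[Filter.cofinite] g) :
    IsEventualTranslation g := by
  obtain ⟨m, hm⟩ := hf
  exact ⟨m, by filter_upwards [hm, hfg] with x hx hfgx; rwa [← hfgx]⟩

end IsEventualTranslation

end Function

theorem isEventualTranslation_iff {n : ℕ} {σ : Equiv.Perm (Fin n × ℕ)} :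
    IsEventualTranslation σ ↔ Function.IsEventualTranslation σ := by
  refine exists_congr fun m => ⟨fun ⟨F, hF⟩ => ?_, fun h => ?_⟩
  · exact Filter.eventually_cofinite.2 <|
      F.finite_toSet.subset fun x hx => by_contra (hx <| hF x ·)
  · have hfin := Filter.eventually_cofinite.1 h
    exact ⟨hfin.toFinset, fun x hx => by_contra fun h' => hx (hfin.mem_toFinset.2 h')⟩

def Equiv.Perm.stabilizerMulEquiv {α : Type*} [DecidableEq α] (a : α) :
    MulAction.stabilizer (Equiv.Perm α) a ≃* Equiv.Perm {x // x ≠ a} where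
  toFun σ := (σ : Equiv.Perm α).subtypePerm fun _ => σ.1.injective.ne_iff' σ.2
  invFun τ := ⟨Equiv.Perm.ofSubtype τ, τ.ofSubtype_apply_of_not_mem (not_not.2 rfl)⟩
  left_inv σ := Subtype.ext <| Equiv.Perm.ofSubtype_subtypePerm _ fun x hx hxa =>
    hx (hxa ▸ σ.2)
  right_inv := Equiv.Perm.subtypePerm_ofSubtype
  map_mul' _ _ := rfl

namespace Houghton

theorem eventually_le_snd {ι : Type*} (i : ι) (N : ℕ) :
    ∀ᶠ x : ι × ℕ in Filter.cofinite, x.1 = i → N ≤ x.2 := by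
  refine Filter.eventually_cofinite.2 (((Set.finite_lt_nat N).image (Prod.mk i)).subset ?_)
  rintro ⟨j, k⟩ hx
  obtain ⟨rfl, hk⟩ : j = i ∧ k < N := by simpa using hx
  exact ⟨k, hk, rfl⟩

variable {ι : Type*} [DecidableEq ι]

def shift (p x : ι × ℕ) : ι × ℕ :=
  if x.1 = p.1 ∧ p.2 ≤ x.2 then (x.1, x.2 + 1) else x

def unshift (p x : ι × ℕ) : ι × ℕ :=
  if x.1 = p.1 ∧ p.2 < x.2 then (x.1, x.2 - 1) else x

theorem unshift_shift (p x : ι × ℕ) : unshift p (shift p x) = x := by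
  unfold shift unshift
  grind

theorem shift_ne (p x : ι × ℕ) : shift p x ≠ p := by
  unfold shift
  grind

theorem shift_unshift {p x : ι × ℕ} (hx : x ≠ p) : shift p (unshift p x) = x := by
  unfold shift unshift
  grind

def shiftEquiv (p : ι × ℕ) : ι × ℕ ≃ {x // x ≠ p} where
  toFun x := ⟨shift p x, shift_ne p x⟩
  invFun y := unshift p y
  left_inv := unshift_shift p
  right_inv y := Subtype.ext (shift_unshift y.2)

theorem isEventualTranslation_shift (p : ι × ℕ) :
    Function.IsEventualTranslation (shift p) := by
  refine ⟨fun i => if i = p.1 then 1 else 0, ?_⟩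
  filter_upwards [eventually_le_snd p.1 p.2] with ⟨i, k⟩ hk
  by_cases hi : i = p.1
  · subst hi
    simp [shift, hk rfl]
  · simp [shift, hi]

theorem isEventualTranslation_unshift (p : ι × ℕ) :
    Function.IsEventualTranslation (unshift p) := by
  refine ⟨fun i => if i = p.1 then -1 else 0, ?_⟩
  filter_upwards [eventually_le_snd p.1 (p.2 + 1)] with ⟨i, k⟩ hk
  by_cases hi : i = p.1
  · subst hi
    have hk : p.2 + 1 ≤ k := hk rfl
    simp only [unshift, show p.2 < k by omega, and_self, if_true, true_and]
    omega
  · simp [unshift, hi]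

def shiftConj (p : ι × ℕ) :
    MulAction.stabilizer (Equiv.Perm (ι × ℕ)) p ≃* Equiv.Perm (ι × ℕ) :=
  (Equiv.Perm.stabilizerMulEquiv p).trans (shiftEquiv p).symm.permCongrHom

theorem coe_shiftConj (p : ι × ℕ) (σ : MulAction.stabilizer (Equiv.Perm (ι × ℕ)) p) :
    ⇑(shiftConj p σ) = unshift p ∘ σ ∘ shift p :=
  rfl

theorem shiftConj_symm_apply_of_ne {p x : ι × ℕ} (τ : Equiv.Perm (ι × ℕ)) (hx : x ≠ p) :
    ((shiftConj p).symm τ : Equiv.Perm (ι × ℕ)) x = shift p (τ (unshift p x)) :=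
  Equiv.Perm.ofSubtype_apply_of_mem (p := (· ≠ p)) _ hx

theorem isEventualTranslation_shiftConj {p : ι × ℕ}
    {σ : MulAction.stabilizer (Equiv.Perm (ι × ℕ)) p}
    (hσ : Function.IsEventualTranslation ⇑(σ : Equiv.Perm (ι × ℕ))) :
    Function.IsEventualTranslation (shiftConj p σ) :=
  coe_shiftConj p σ ▸
    (isEventualTranslation_unshift p).comp (hσ.comp (isEventualTranslation_shift p))

theorem isEventualTranslation_shiftConj_symm {p : ι × ℕ} {τ : Equiv.Perm (ι × ℕ)}
    (hτ : Function.IsEventualTranslation τ) :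
    Function.IsEventualTranslation ((shiftConj p).symm τ : Equiv.Perm (ι × ℕ)) :=
  ((isEventualTranslation_shift p).comp (hτ.comp (isEventualTranslation_unshift p))).congr <|
    (Filter.eventually_cofinite_ne p).mono fun _ hx => (shiftConj_symm_apply_of_ne τ hx).symm

end Houghton

namespace HoughtonGroup

open Houghton

variable {n : ℕ}

def stabilizerMulEquiv (p : Fin n × ℕ) : houghtonStabilizer n p ≃* HoughtonGroup n where
  toFun σ := ⟨shiftConj p ⟨σ.1.1, σ.2⟩, isEventualTranslation_iff.2 <|
    isEventualTranslation_shiftConj (isEventualTranslation_iff.1 σ.1.2)⟩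
  invFun τ := ⟨⟨(shiftConj p).symm τ, isEventualTranslation_iff.2 <|
    isEventualTranslation_shiftConj_symm (isEventualTranslation_iff.1 τ.2)⟩,
    ((shiftConj p).symm τ).2⟩
  left_inv σ := by
    apply Subtype.ext
    apply Subtype.ext
    change ((shiftConj p).symm (shiftConj p ⟨σ.1.1, σ.2⟩) : Equiv.Perm _) = σ.1.1
    rw [MulEquiv.symm_apply_apply]
  right_inv τ := Subtype.ext ((shiftConj p).apply_symm_apply τ.1)
  map_mul' σ τ := by
    apply Subtype.ext
    exact map_mul (shiftConj p) ⟨σ.1.1, σ.2⟩ ⟨τ.1.1, τ.2⟩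

theorem swap_mem (x y : Fin n × ℕ) : Equiv.swap x y ∈ HoughtonGroup n := by
  refine ⟨0, {x, y}, fun z hz => ?_⟩
  simp only [Finset.mem_insert, Finset.mem_singleton, not_or] at hz
  simp [Equiv.swap_apply_of_ne_of_ne hz.1 hz.2]

theorem houghtonStabilizer_eq_stabilizer (p : Fin n × ℕ) :
    houghtonStabilizer n p = MulAction.stabilizer (HoughtonGroup n) p :=
  rfl

theorem infinite_orbit (p : Fin n × ℕ) : (MulAction.orbit (HoughtonGroup n) p).Infinite :=
  Set.infinite_of_injective_forall_mem (Prod.mk_right_injective p.1) fun k =>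
    ⟨⟨Equiv.swap p (p.1, k), swap_mem _ _⟩, Equiv.swap_apply_left _ _⟩

theorem index_houghtonStabilizer (p : Fin n × ℕ) : (houghtonStabilizer n p).index = 0 := by
  rw [houghtonStabilizer_eq_stabilizer, MulAction.index_stabilizer, (infinite_orbit p).ncard]

end HoughtonGroup

-- `Subgroup.index` is `0` exactly for subgroups of infinite index.
theorem houghton_stabilizer_iso_and_infinite_index_general (n : ℕ) (p : Fin n × ℕ) :
    Nonempty (houghtonStabilizer n p ≃* HoughtonGroup n) ∧
    (houghtonStabilizer n p).index = 0 :=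
  ⟨⟨HoughtonGroup.stabilizerMulEquiv p⟩, HoughtonGroup.index_houghtonStabilizer p⟩

/-- The stabilizer of any point `p` in the Houghton group `H_n` (`n ≥ 1`) is isomorphic to
`H_n` itself, and has infinite index in `H_n` (index `0` in Mathlib's convention). -/
theorem houghton_stabilizer_iso_and_infinite_index (n : ℕ) (hn : 1 ≤ n) (p : Fin n × ℕ) :
    Nonempty (houghtonStabilizer n p ≃* HoughtonGroup n) ∧
    (houghtonStabilizer n p).index = 0 :=
  houghton_stabilizer_iso_and_infinite_index_general n p
end

section
/- Fix n ≥ 1 and let S be any finite subset of Fin n × ℕ. The pointwise stabilizer of S in the Houghton group H_n, namely the subgroup {σ ∈ H_n : σ(x) = x for all x ∈ S}, is isomorphic as a group to H_n itself. -/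
/-- The pointwise stabilizer of a finite set `S` in the Houghton group: the subgroup of
elements of `H_n` fixing every point of `S`. -/
def houghtonPointwiseStabilizer (n : ℕ) (S : Finset (Fin n × ℕ)) :
    Subgroup (HoughtonGroup n) where
  carrier := {σ | ∀ x ∈ S, (σ : Equiv.Perm (Fin n × ℕ)) x = x}
  one_mem' := fun x _ => rfl
  mul_mem' := by
    intro a b ha hb
    simp only [Set.mem_setOf_eq] at *
    intro x hx
    simp [Equiv.Perm.mul_apply, ha x hx, hb x hx]
  inv_mem' := by
    intro a ha
    simp only [Set.mem_setOf_eq] at *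
    intro x hx
    simp only [Subgroup.coe_inv]
    exact (Equiv.symm_apply_eq _).mpr (ha x hx).symm

/-!
Deleting `S` from each ray `{i} × ℕ` and renumbering the remaining points in increasing order
gives a bijection `e : Fin n × ℕ ≃ Sᶜ` that is a translation far out on every ray, with inverse
`Nat.count` along each ray. Conjugation by `e`, extended by the identity on `S`, is an injective
homomorphism of `Perm (Fin n × ℕ)` onto the permutations fixing `S` pointwise. Maps that are
eventually translations are closed under composition, so a permutation is an eventual
translation iff its conjugate is, and the homomorphism restricts to `H_n ≃* Stab(S)`.
-/
open Filter Function

theorem Nat.exists_count_add_eq_of_eventually {p : ℕ → Prop} [DecidablePred p]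
    (h : ∀ᶠ k in atTop, p k) : ∃ c, ∀ᶠ k in atTop, Nat.count p k + c = k := by
  obtain ⟨B, hB⟩ := eventually_atTop.1 h
  refine ⟨B - Nat.count p B, eventually_atTop.2 ⟨B, fun k hk => ?_⟩⟩
  obtain ⟨d, rfl⟩ := Nat.exists_eq_add_of_le hk
  rw [Nat.count_add, Nat.count_of_forall fun j _ => hB _ (Nat.le_add_right B j)]
  have : Nat.count p B ≤ B := Nat.count_le p
  omega

theorem Nat.eventually_nth_eq_add {p : ℕ → Prop} [DecidablePred p] {c : ℕ}
    (h : ∀ᶠ k in atTop, p k) (hc : ∀ᶠ k in atTop, Nat.count p k + c = k) :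
    ∀ᶠ j in atTop, Nat.nth p j = j + c := by
  obtain ⟨B, hB⟩ := eventually_atTop.1 (h.and hc)
  refine eventually_atTop.2 ⟨B, fun j hj => ?_⟩
  obtain ⟨hp, hcount⟩ := hB (j + c) (by omega)
  have : Nat.count p (j + c) = j := by omega
  rw [← Nat.nth_count hp, this]

theorem eventually_cofinite_prod_nat {ι : Type*} [Finite ι] {P : ι × ℕ → Prop}
    (h : ∀ i, ∀ᶠ k in atTop, P (i, k)) : ∀ᶠ q in cofinite, P q := by
  rw [← coprod_cofinite, cofinite_eq_bot, bot_coprod, Nat.cofinite_eq_atTop, eventually_comap]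
  filter_upwards [eventually_all.2 h] with k hk q rfl
  exact hk q.1

section EventualShift

variable {ι : Type*}

def IsEventualShift (f : ι × ℕ → ι × ℕ) : Prop :=
  ∃ m : ι → ℤ, ∀ᶠ q in cofinite, (f q).1 = q.1 ∧ ((f q).2 : ℤ) = q.2 + m q.1

theorem IsEventualShift.tendsto_cofinite {f : ι × ℕ → ι × ℕ} (hf : IsEventualShift f) :
    Tendsto f cofinite cofinite := by
  obtain ⟨m, hm⟩ := hf
  have hcast : Injective (Prod.map id ((↑) : ℕ → ℤ) : ι × ℕ → ι × ℤ) :=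
    injective_id.prodMap Nat.cast_injective
  have hshift : Injective fun q : ι × ℕ => (q.1, (q.2 : ℤ) + m q.1) := by
    rintro ⟨i, k⟩ ⟨j, l⟩ h
    simp only [Prod.mk.injEq] at h
    obtain ⟨rfl, h⟩ := h
    simpa using h
  refine (tendsto_comap_iff.2 (hshift.tendsto_cofinite.congr' ?_)).mono_right
    hcast.comap_cofinite_eq.le
  filter_upwards [hm] with q hq
  exact Prod.ext hq.1.symm hq.2.symm

theorem IsEventualShift.comp {f g : ι × ℕ → ι × ℕ} (hg : IsEventualShift g)
    (hf : IsEventualShift f) : IsEventualShift (g ∘ f) := by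
  have hf_tendsto := hf.tendsto_cofinite
  obtain ⟨m, hm⟩ := hg
  obtain ⟨m', hm'⟩ := hf
  refine ⟨m + m', ?_⟩
  filter_upwards [hf_tendsto.eventually hm, hm'] with q hg hf
  simp only [comp_apply, hg.1, hf.1, hg.2, hf.2, Pi.add_apply, true_and]
  ring

theorem IsEventualShift.congr {f g : ι × ℕ → ι × ℕ} (hf : IsEventualShift f)
    (hfg : f =ᶠ[cofinite] g) : IsEventualShift g := by
  obtain ⟨m, hm⟩ := hf
  exact ⟨m, by filter_upwards [hm, hfg] with q hq hfg; rwa [← hfg]⟩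

end EventualShift

theorem mem_houghtonGroup_iff {n : ℕ} {σ : Equiv.Perm (Fin n × ℕ)} :
    σ ∈ HoughtonGroup n ↔ IsEventualShift σ := by
  refine ⟨fun ⟨m, F, hF⟩ => ⟨m, ?_⟩, fun ⟨m, hm⟩ => ⟨m, (eventually_cofinite.1 hm).toFinset, ?_⟩⟩
  · exact eventually_cofinite.2 (F.finite_toSet.subset fun q hq => by_contra (hq ∘ hF q))
  · intro q hq
    simpa using hq

section ComplementEnumeration

variable {ι : Type*} (S : Finset (ι × ℕ))

theorem eventually_notMem_fiber (i : ι) : ∀ᶠ k in atTop, (i, k) ∉ S := by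
  rw [← Nat.cofinite_eq_atTop]
  exact (Prod.mk_right_injective i).tendsto_cofinite.eventually S.eventually_cofinite_notMem

theorem infinite_fiber_compl (i : ι) : (Set.ofPred fun k => (i, k) ∉ S).Infinite :=
  Nat.frequently_atTop_iff_infinite.1 (eventually_notMem_fiber S i).frequently

noncomputable def enumCompl (q : ι × ℕ) : ι × ℕ :=
  (q.1, Nat.nth (fun k => (q.1, k) ∉ S) q.2)

theorem enumCompl_notMem (q : ι × ℕ) : enumCompl S q ∉ S :=
  Nat.nth_mem_of_infinite (infinite_fiber_compl S q.1) q.2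

variable [DecidableEq ι]

def rankCompl (q : ι × ℕ) : ι × ℕ :=
  (q.1, Nat.count (fun k => (q.1, k) ∉ S) q.2)

theorem rankCompl_enumCompl (q : ι × ℕ) : rankCompl S (enumCompl S q) = q :=
  Prod.ext rfl (Nat.count_nth_of_infinite (infinite_fiber_compl S q.1) q.2)

theorem enumCompl_rankCompl {q : ι × ℕ} (hq : q ∉ S) : enumCompl S (rankCompl S q) = q :=
  Prod.ext rfl (Nat.nth_count (p := fun k => (q.1, k) ∉ S) hq)

theorem exists_eventually_count_fiber_add_eq :
    ∃ c : ι → ℕ, ∀ i, ∀ᶠ k in atTop, Nat.count (fun k => (i, k) ∉ S) k + c i = k :=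
  ⟨_, fun i => (Nat.exists_count_add_eq_of_eventually (eventually_notMem_fiber S i)).choose_spec⟩

theorem isEventualShift_enumCompl [Finite ι] : IsEventualShift (enumCompl S) := by
  obtain ⟨c, hc⟩ := exists_eventually_count_fiber_add_eq S
  refine ⟨fun i => c i, eventually_cofinite_prod_nat fun i => ?_⟩
  filter_upwards [Nat.eventually_nth_eq_add (eventually_notMem_fiber S i) (hc i)] with k hk
  simp [enumCompl, hk]

theorem isEventualShift_rankCompl [Finite ι] : IsEventualShift (rankCompl S) := by
  obtain ⟨c, hc⟩ := exists_eventually_count_fiber_add_eq S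
  refine ⟨fun i => -c i, eventually_cofinite_prod_nat fun i => ?_⟩
  filter_upwards [hc i] with k hk
  simp only [rankCompl, true_and]
  omega

noncomputable def complEquiv : ι × ℕ ≃ {q // q ∉ S} where
  toFun q := ⟨enumCompl S q, enumCompl_notMem S q⟩
  invFun q := rankCompl S q
  left_inv := rankCompl_enumCompl S
  right_inv q := Subtype.ext (enumCompl_rankCompl S q.2)

noncomputable def fixingHom : Equiv.Perm (ι × ℕ) →* Equiv.Perm (ι × ℕ) :=
  Equiv.Perm.ofSubtype.comp (complEquiv S).permCongrHom.toMonoidHom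

variable {S}

theorem fixingHom_apply_of_mem (τ : Equiv.Perm (ι × ℕ)) {q : ι × ℕ} (hq : q ∈ S) :
    fixingHom S τ q = q :=
  Equiv.Perm.ofSubtype_apply_of_not_mem _ (not_not.2 hq)

theorem fixingHom_apply_enumCompl (τ : Equiv.Perm (ι × ℕ)) (q : ι × ℕ) :
    fixingHom S τ (enumCompl S q) = enumCompl S (τ q) := by
  show Equiv.Perm.ofSubtype ((complEquiv S).permCongr τ) (complEquiv S q : ι × ℕ) = _
  rw [Equiv.Perm.ofSubtype_apply_coe, Equiv.permCongr_apply, Equiv.symm_apply_apply]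
  rfl

theorem fixingHom_apply_of_notMem (τ : Equiv.Perm (ι × ℕ)) {q : ι × ℕ} (hq : q ∉ S) :
    fixingHom S τ q = enumCompl S (τ (rankCompl S q)) := by
  conv_lhs => rw [← enumCompl_rankCompl S hq]
  exact fixingHom_apply_enumCompl τ _

variable (S) in
theorem fixingHom_injective : Injective (fixingHom S) :=
  Equiv.Perm.ofSubtype_injective.comp (MulEquiv.injective _)

theorem exists_fixingHom_eq {σ : Equiv.Perm (ι × ℕ)} (hσ : ∀ x ∈ S, σ x = x) :
    ∃ τ, fixingHom S τ = σ := by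
  have hσS (x : ι × ℕ) : σ x ∉ S ↔ x ∉ S :=
    not_congr ⟨fun h => by rwa [← σ.injective (hσ _ h)], fun h => by rwa [hσ x h]⟩
  refine ⟨(complEquiv S).permCongrHom.symm (σ.subtypePerm hσS), ?_⟩
  rw [fixingHom, MonoidHom.comp_apply, MulEquiv.coe_toMonoidHom, MulEquiv.apply_symm_apply]
  exact Equiv.Perm.ofSubtype_subtypePerm hσS fun x hx hxS => hx (hσ x hxS)

theorem isEventualShift_fixingHom_iff [Finite ι] {τ : Equiv.Perm (ι × ℕ)} :
    IsEventualShift (fixingHom S τ) ↔ IsEventualShift τ := by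
  constructor
  · intro h
    have hτ : ⇑τ = rankCompl S ∘ fixingHom S τ ∘ enumCompl S := funext fun q => by
      simp [fixingHom_apply_enumCompl, rankCompl_enumCompl]
    rw [hτ]
    exact (isEventualShift_rankCompl S).comp (h.comp (isEventualShift_enumCompl S))
  · intro h
    refine ((isEventualShift_enumCompl S).comp (h.comp (isEventualShift_rankCompl S))).congr ?_
    filter_upwards [S.eventually_cofinite_notMem] with q hq
    exact (fixingHom_apply_of_notMem τ hq).symm

end ComplementEnumeration

theorem fixingHom_mem_houghtonGroup_iff {n : ℕ} {S : Finset (Fin n × ℕ)}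
    {τ : Equiv.Perm (Fin n × ℕ)} : fixingHom S τ ∈ HoughtonGroup n ↔ τ ∈ HoughtonGroup n := by
  simp only [mem_houghtonGroup_iff, isEventualShift_fixingHom_iff]

theorem map_fixingHom_houghtonGroup (n : ℕ) (S : Finset (Fin n × ℕ)) :
    (HoughtonGroup n).map (fixingHom S) =
      (houghtonPointwiseStabilizer n S).map (HoughtonGroup n).subtype := by
  ext σ
  constructor
  · rintro ⟨τ, hτ, rfl⟩
    exact ⟨⟨fixingHom S τ, fixingHom_mem_houghtonGroup_iff.2 hτ⟩,
      fun x hx => fixingHom_apply_of_mem τ hx, rfl⟩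
  · rintro ⟨σ, hσ, rfl⟩
    obtain ⟨τ, hτ⟩ := exists_fixingHom_eq hσ
    exact ⟨τ, fixingHom_mem_houghtonGroup_iff.1 (hτ ▸ σ.2), hτ⟩

theorem houghton_pointwise_stabilizer_iso_general (n : ℕ) (S : Finset (Fin n × ℕ)) :
    Nonempty (houghtonPointwiseStabilizer n S ≃* HoughtonGroup n) :=
  ⟨(Subgroup.equivMapOfInjective _ _ (HoughtonGroup n).subtype_injective).trans <|
    (MulEquiv.subgroupCongr (map_fixingHom_houghtonGroup n S)).symm.trans
      (Subgroup.equivMapOfInjective _ _ (fixingHom_injective S)).symm⟩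

/-- For any finite subset `S` of `Fin n × ℕ`, the pointwise stabilizer of `S` in the
Houghton group `H_n` (`n ≥ 1`) is isomorphic to `H_n` itself. -/
theorem houghton_pointwise_stabilizer_iso (n : ℕ) (hn : 1 ≤ n) (S : Finset (Fin n × ℕ)) :
    Nonempty (houghtonPointwiseStabilizer n S ≃* HoughtonGroup n) :=
  houghton_pointwise_stabilizer_iso_general n S
end
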